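/- The kernel of the linear map M_E is exactly the 3-dimensional subspace consisting of all vectors c^E_0(λ1,λ2,λ3) = (−λ1−λ2+λ3, −λ1+λ2−λ3, λ1−λ2−λ3, −λ1−λ2+λ3, −λ1−λ2+λ3, −λ1+λ2−λ3, −λ1+λ2−λ3, λ1−λ2−λ3, λ1−λ2−λ3, λ1+λ2−λ3, λ1−λ2+λ3, −λ1+λ2+λ3, 2λ1, 2λ2, 2λ3) ∈ ℝ^15 with λ1, λ2, λ3 ∈ ℝ, and the map (λ1,λ2,λ3) ↦ c^E_0(λ1,λ2,λ3) is injective. -/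
import Mathlib


noncomputable section

/-- The coefficient matrix `M_E` of the type-E divergence system:
rows are `d29,…,d46`, columns are `c39,…,c53`. -/
def ME : Matrix (Fin 18) (Fin 15) ℝ :=
  !![0, 0, 0, 1, 0, 0, 0, 0, 0, 1, 0, 0, 0, 0, 0;
    0, 1, 0, 1, 0, 0, 0, 0, 0, 0, 0, 0, 1, 0, 0;
    0, 0, 0, 1, 0, 0, 0, 0, 1, 0, 0, 0, 0, 1, 0;
    0, 0, 0, 0, 1, 0, 0, 0, 0, 1, 0, 0, 0, 0, 0;
    0, 0, 0, 0, 1, 1, 0, 0, 0, 0, 0, 0, 1, 0, 0;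
    0, 0, 1, 0, 1, 0, 0, 0, 0, 0, 0, 0, 0, 1, 0;
    0, 0, 0, 0, 0, 1, 0, 0, 0, 0, 1, 0, 0, 0, 0;
    0, 0, 1, 0, 0, 1, 0, 0, 0, 0, 0, 0, 0, 0, 1;
    1, 0, 0, 0, 0, 0, 1, 0, 0, 0, 0, 0, 1, 0, 0;
    0, 0, 0, 0, 0, 0, 1, 0, 0, 0, 1, 0, 0, 0, 0;
    0, 0, 0, 0, 0, 0, 1, 1, 0, 0, 0, 0, 0, 0, 1;
    1, 0, 0, 0, 0, 0, 0, 1, 0, 0, 0, 0, 0, 1, 0;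
    0, 0, 0, 0, 0, 0, 0, 1, 0, 0, 0, 1, 0, 0, 0;
    0, 1, 0, 0, 0, 0, 0, 0, 1, 0, 0, 0, 0, 0, 1;
    0, 0, 0, 0, 0, 0, 0, 0, 1, 0, 0, 1, 0, 0, 0;
    1, 0, 0, 0, 0, 0, 0, 0, 0, 1, 0, 0, 0, 0, 0;
    0, 1, 0, 0, 0, 0, 0, 0, 0, 0, 1, 0, 0, 0, 0;
    0, 0, 1, 0, 0, 0, 0, 0, 0, 0, 0, 1, 0, 0, 0]

/-- The kernel parametrization `c^E_0(λ1,λ2,λ3) ∈ ℝ^15`. -/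
def cE0 (l1 l2 l3 : ℝ) : Fin 15 → ℝ :=
  ![-l1 - l2 + l3,
    -l1 + l2 - l3,
    l1 - l2 - l3,
    -l1 - l2 + l3,
    -l1 - l2 + l3,
    -l1 + l2 - l3,
    -l1 + l2 - l3,
    l1 - l2 - l3,
    l1 - l2 - l3,
    l1 + l2 - l3,
    l1 - l2 + l3,
    -l1 + l2 + l3,
    2 * l1,
    2 * l2,
    2 * l3]

/-- The kernel of `M_E` is exactly the set of vectors `c^E_0(λ1,λ2,λ3)`,
and the parametrization `(λ1,λ2,λ3) ↦ c^E_0(λ1,λ2,λ3)` is injective. -/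
theorem ME_kernel :
    (∀ c : Fin 15 → ℝ, ME.mulVec c = 0 ↔ ∃ l1 l2 l3 : ℝ, c = cE0 l1 l2 l3) ∧
    Function.Injective (fun l : ℝ × ℝ × ℝ => cE0 l.1 l.2.1 l.2.2) := by
  constructor
  · intro c
    constructor
    · intro h
      refine ⟨c 12 / 2, c 13 / 2, c 14 / 2, ?_⟩
      have hc : c = ![c 0, c 1, c 2, c 3, c 4, c 5, c 6, c 7, c 8, c 9, c 10, c 11, c 12, c 13, c 14] := by funext i; fin_cases i <;> rfl
      have H : ∀ i, ME.mulVec ![c 0, c 1, c 2, c 3, c 4, c 5, c 6, c 7, c 8, c 9, c 10, c 11, c 12, c 13, c 14] i = 0 := fun i => by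
        rw [← hc]; exact congrFun h i
      simp [ME, Matrix.mulVec, dotProduct, Fin.sum_univ_succ,
        Fin.forall_fin_succ] at H
      obtain ⟨h0, h1, h2, h3, h4, h5, h6, h7, h8, h9, h10, h11, h12, h13, h14, h15, h16,
        h17⟩ := H
      conv_lhs => rw [hc]
      rw [funext_iff]
      simp only [cE0, Fin.forall_fin_succ, Matrix.cons_val_zero, Matrix.cons_val_succ,
        IsEmpty.forall_iff, and_true]
      refine ⟨?_, ?_, ?_, ?_, ?_, ?_, ?_, ?_, ?_, ?_, ?_, ?_, ?_, ?_, ?_⟩ <;> linarith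
    · rintro ⟨l1, l2, l3, rfl⟩
      rw [funext_iff]
      simp only [ME, cE0, Matrix.mulVec, dotProduct, Fin.sum_univ_succ,
        Fin.sum_univ_zero, Fin.forall_fin_succ, Matrix.cons_val_zero, Matrix.cons_val_succ,
        Matrix.of_apply, Pi.zero_apply, IsEmpty.forall_iff, and_true]
      and_intros <;> ring
  · rintro ⟨a1, a2, a3⟩ ⟨b1, b2, b3⟩ h
    have h12 : 2 * a1 = 2 * b1 := congrFun h 12
    have h13 : 2 * a2 = 2 * b2 := congrFun h 13
    have h14 : 2 * a3 = 2 * b3 := congrFun h 14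
    simp only [Prod.mk.injEq]
    exact ⟨by linarith, by linarith, by linarith⟩
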